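/- arXiv:1407.5850 — 3 statements merged into one kernel-verified Lean document; each statement's English description precedes it below -/
import Mathlib

section
/- Generalized Lagrange formula: let v₁,…,v_{n-1} be n-1 linearly independent vectors and w₁,…,w_n be n linearly independent vectors in ℂ^{n+1}. Set a = L(w₁∧…∧w_n) and b = L(v₁∧…∧v_{n-1}∧a). Then b = (-1)^n times the vector-valued determinant of the n×n matrix whose first row has vector entries w₁,…,w_n and whose (i+1)-st row is (vᵢ·w₁, …, vᵢ·w_n), i.e., b = (-1)^n Σ_σ sgn(σ) w_{σ(1)} Π_{i=1}^{n-1} (vᵢ·w_{σ(i+1)}). -/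
noncomputable section
open scoped BigOperators ComplexConjugate

namespace ProjSimplex

/-- The symmetric bilinear dot product `a·b = Σ aᵢbᵢ` on `ℂ^m`. -/
def dotC {m : ℕ} (a b : Fin m → ℂ) : ℂ := ∑ i, a i * b i

/-- Squared Hermitian norm `Σ |aᵢ|²`. -/
def hermNormSq {m : ℕ} (a : Fin m → ℂ) : ℝ := ∑ i, ‖a i‖ ^ 2

/-- Hermitian norm. -/
def hermNorm {m : ℕ} (a : Fin m → ℂ) : ℝ := Real.sqrt (hermNormSq a)

/-- The minor (Plücker coordinate) of the family `v` on the increasing index set `s`: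
the coefficient of `e_{s 0} ∧ … ∧ e_{s (k-1)}` in `v 0 ∧ … ∧ v (k-1)`. -/
def minor {n k : ℕ} (v : Fin k → Fin (n+1) → ℂ) (s : Fin k ↪o Fin (n+1)) : ℂ :=
  Matrix.det (Matrix.of fun i j => v i (s j))

/-- The bilinear pairing on `Λᵏ ℂ^{n+1}` induced by declaring the standard
wedge basis orthonormal, evaluated on `v 0 ∧ … ∧ v (k-1)` and `w 0 ∧ … ∧ w (k-1)`. -/
def wedgeDot {n k : ℕ} (v w : Fin k → Fin (n+1) → ℂ) : ℂ :=
  ∑ s : Fin k ↪o Fin (n+1), minor v s * minor w s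

/-- The squared norm of `v 0 ∧ … ∧ v (k-1)` in `Λᵏ ℂ^{n+1}`. -/
def wedgeNormSq {n k : ℕ} (v : Fin k → Fin (n+1) → ℂ) : ℝ :=
  ∑ s : Fin k ↪o Fin (n+1), ‖minor v s‖ ^ 2

/-- The norm of `v 0 ∧ … ∧ v (k-1)` in `Λᵏ ℂ^{n+1}`. -/
def wedgeNorm {n k : ℕ} (v : Fin k → Fin (n+1) → ℂ) : ℝ :=
  Real.sqrt (wedgeNormSq v)

/-- The generalized cross product `L(b 0 ∧ … ∧ b (n-1))`, where
`L : Λⁿ ℂ^{n+1} → ℂ^{n+1}` sends `e₀∧…∧êⱼ∧…∧e_n` to `(-1)ʲ eⱼ`. -/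
def crossProd {n : ℕ} (b : Fin n → Fin (n+1) → ℂ) : Fin (n+1) → ℂ :=
  fun j => (-1 : ℂ) ^ (j : ℕ) * Matrix.det (Matrix.of fun i l => b i (j.succAbove l))

/-- `det(a, b₁, …, b_n)`: determinant of the `(n+1)×(n+1)` matrix with rows
`a, b 0, …, b (n-1)`. -/
def rowsDet {n : ℕ} (a : Fin (n+1) → ℂ) (b : Fin n → Fin (n+1) → ℂ) : ℂ :=
  Matrix.det (Matrix.of (Fin.cons a b : Fin (n+1) → Fin (n+1) → ℂ))

/-!
Expanding the determinant defining `b_t` along its last row `a = L(w)` gives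
`b_t = (-1)ⁿ L(e_t, v₁, …, v_{n-1}) · L(w₁, …, w_n)`. By the Cauchy–Binet formula for
`n × (n+1)` matrices, the dot product of two cross products
`L(u) · L(w)` is the Gram determinant `det (uᵢ · w_k)`; for `u = (e_t, v)` the first row of
that Gram matrix is `((w_k)_t)_k`, and the Leibniz expansion yields the formula.
-/

open Matrix Equiv

theorem _root_.Fin.sum_eq_sum_succAbove_comp_perm {M : Type*} [AddCommMonoid M] {n : ℕ}
    (g : (Fin n → Fin (n+1)) → M) (hg : ∀ p, ¬ Function.Injective p → g p = 0) :
    ∑ p, g p = ∑ j : Fin (n+1), ∑ τ : Perm (Fin n), g (j.succAbove ∘ τ) := by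
  rw [← Fintype.sum_prod_type', ← Finset.sum_subset (Finset.subset_univ
    (Finset.univ.filter Function.Injective)) (fun p _ hp => hg p (by simpa using hp))]
  refine (Finset.sum_bij (fun x _ => x.1.succAbove ∘ x.2) ?_ ?_ ?_ fun _ _ => rfl).symm
  · intro x _
    simpa using Fin.succAbove_right_injective.comp x.2.injective
  · rintro ⟨j, τ⟩ _ ⟨j', τ'⟩ _ h
    have hj : j = j' := by
      simpa [Set.range_comp, Fin.range_succAbove] using congrArg Set.range h
    subst hj
    simpa [Equiv.ext_iff, funext_iff] using h
  · intro p hp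
    have hinj : Function.Injective p := by simpa using hp
    obtain ⟨j, hj⟩ : ∃ j, j ∉ Set.range p := by
      by_contra! h
      simpa using Fintype.card_le_of_surjective p h
    choose q hq using fun i => Fin.exists_succAbove_eq (fun h => hj ⟨i, h⟩)
    have hqinj : Function.Injective q := fun i i' h => hinj (by rw [← hq i, ← hq i', h])
    exact ⟨⟨j, Equiv.ofBijective q hqinj.bijective_of_finite⟩, Finset.mem_univ _, funext hq⟩

theorem _root_.Matrix.det_mul_transpose_eq_sum_succAbove {R : Type*} [CommRing R] {n : ℕ}
    (A B : Matrix (Fin n) (Fin (n+1)) R) :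
    (A * Bᵀ).det = ∑ j : Fin (n+1),
      (A.submatrix id j.succAbove).det * (B.submatrix id j.succAbove).det := by
  have hexpand : (A * Bᵀ).det = ∑ p : Fin n → Fin (n+1),
      (∏ i, A i (p i)) * (Bᵀ.submatrix p id).det := by
    have hrows : A * Bᵀ = fun i => ∑ l, A i l • Bᵀ l := by
      ext i k
      simp [Matrix.mul_apply, Finset.sum_apply]
    rw [hrows]
    unfold det
    rw [← AlternatingMap.coe_multilinearMap, MultilinearMap.map_sum]
    simp only [AlternatingMap.coe_multilinearMap, AlternatingMap.map_smul_univ, smul_eq_mul]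
    rfl
  rw [hexpand, Fin.sum_eq_sum_succAbove_comp_perm]
  · refine Finset.sum_congr rfl fun j _ => ?_
    have hperm (τ : Perm (Fin n)) : (Bᵀ.submatrix (j.succAbove ∘ τ) id).det
        = Perm.sign τ * (B.submatrix id j.succAbove).det := by
      rw [← det_transpose (B.submatrix _ _), ← det_permute]
      rfl
    simp_rw [hperm, ← det_transpose (A.submatrix _ _), det_apply', Finset.sum_mul]
    refine Finset.sum_congr rfl fun τ _ => ?_
    simp only [Function.comp_apply, transpose_apply, submatrix_apply, id_eq]
    ring
  · intro p hp
    obtain ⟨i, i', hpi, hii'⟩ : ∃ i i', p i = p i' ∧ i ≠ i' := by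
      simpa [Function.Injective] using hp
    rw [det_zero_of_row_eq hii' (by ext; simp [hpi]), mul_zero]

theorem dotC_eq_dotProduct {m : ℕ} (a b : Fin m → ℂ) : dotC a b = a ⬝ᵥ b := rfl

theorem dotC_crossProd {n : ℕ} (x : Fin (n+1) → ℂ) (c : Fin n → Fin (n+1) → ℂ) :
    dotC x (crossProd c) = rowsDet x c := by
  rw [rowsDet, det_succ_row_zero, dotC]
  refine Finset.sum_congr rfl fun j _ => ?_
  simp only [crossProd, submatrix, of_apply, Fin.cons_zero, Fin.cons_succ]
  ring

theorem crossProd_apply_eq_rowsDet {n : ℕ} (c : Fin n → Fin (n+1) → ℂ) (t : Fin (n+1)) :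
    crossProd c t = rowsDet (Pi.single t 1) c := by
  rw [← dotC_crossProd, dotC_eq_dotProduct, single_dotProduct, one_mul]

theorem det_of_snoc {n : ℕ} (c : Fin n → Fin (n+1) → ℂ) (a : Fin (n+1) → ℂ) :
    (of (Fin.snoc c a : Fin (n+1) → Fin (n+1) → ℂ)).det = (-1) ^ n * dotC (crossProd c) a := by
  rw [det_succ_row _ (Fin.last n), dotC, Finset.mul_sum]
  refine Finset.sum_congr rfl fun j _ => ?_
  simp only [crossProd, submatrix, of_apply, Fin.snoc_last, Fin.succAbove_last,
    Fin.snoc_castSucc, Fin.val_last, pow_add]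
  ring

theorem dotC_crossProd_crossProd {n : ℕ} (u w : Fin n → Fin (n+1) → ℂ) :
    dotC (crossProd u) (crossProd w) = (of fun i k => dotC (u i) (w k)).det := by
  have hgram : (of fun i k => dotC (u i) (w k)) = of u * (of w)ᵀ := rfl
  rw [hgram, det_mul_transpose_eq_sum_succAbove, dotC]
  refine Finset.sum_congr rfl fun j _ => ?_
  have hsq : (-1 : ℂ) ^ (j : ℕ) * (-1) ^ (j : ℕ) = 1 := by rw [← mul_pow]; norm_num
  simp only [crossProd, submatrix, of_apply, id_eq]
  linear_combination (of fun i l => u i (j.succAbove l)).det *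
    (of fun i l => w i (j.succAbove l)).det * hsq

theorem crossProd_snoc_apply {n : ℕ} (v : Fin n → Fin (n+2) → ℂ) (a : Fin (n+2) → ℂ)
    (t : Fin (n+2)) :
    crossProd (Fin.snoc v a) t
      = (-1) ^ (n+1) * dotC (crossProd (Fin.cons (Pi.single t 1) v)) a := by
  rw [crossProd_apply_eq_rowsDet, rowsDet, Fin.cons_snoc_eq_snoc_cons, det_of_snoc]

/-- Here the paper's `n` is `m+1`: `v` consists of `n-1 = m` vectors and `w` of `n = m+1`
vectors in `ℂ^{n+1} = ℂ^{m+2}`. -/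
theorem lagrange_formula_general {m : ℕ} (v : Fin m → Fin (m+2) → ℂ)
    (w : Fin (m+1) → Fin (m+2) → ℂ) :
    crossProd (Fin.snoc v (crossProd w)) = fun t =>
      (-1 : ℂ) ^ (m+1) *
        ∑ σ : Equiv.Perm (Fin (m+1)),
          ((Equiv.Perm.sign σ : ℤ) : ℂ) * w (σ 0) t *
            ∏ i : Fin m, dotC (v i) (w (σ i.succ)) := by
  funext t
  rw [crossProd_snoc_apply, dotC_crossProd_crossProd, ← det_transpose, det_apply']
  congr 1
  refine Finset.sum_congr rfl fun σ _ => ?_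
  simp only [Fin.prod_univ_succ, transpose_apply, of_apply, Fin.cons_zero, Fin.cons_succ,
    dotC_eq_dotProduct, single_dotProduct, one_mul]
  ring

/-- generalized Lagrange formula. Here the paper's `n` is `m+1`:
`v` consists of `n-1 = m` vectors and `w` of `n = m+1` vectors in `ℂ^{n+1} = ℂ^{m+2}`;
`a = L(w₁∧…∧w_n)` and `b = L(v₁∧…∧v_{n-1}∧a)` satisfy
`b = (-1)^n Σ_σ sgn(σ) w_{σ(1)} Π_{i=1}^{n-1} (vᵢ·w_{σ(i+1)})`. -/
theorem lagrange_formula {m : ℕ} (v : Fin m → Fin (m+2) → ℂ)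
    (w : Fin (m+1) → Fin (m+2) → ℂ)
    (hv : LinearIndependent ℂ v) (hw : LinearIndependent ℂ w) :
    crossProd (Fin.snoc v (crossProd w)) = fun t =>
      (-1 : ℂ) ^ (m+1) *
        ∑ σ : Equiv.Perm (Fin (m+1)),
          ((Equiv.Perm.sign σ : ℤ) : ℂ) * w (σ 0) t *
            ∏ i : Fin m, dotC (v i) (w (σ i.succ)) :=
  lagrange_formula_general v w

end ProjSimplex
end
end

section
/- Let a, u₁,…,u_n be n+1 linearly independent vectors in ℂ^{n+1}, and for j = 1,…,n let vⱼ = L(a∧u₁∧…∧u_{j-1}∧u_{j+1}∧…∧u_n). Then L(v₁∧…∧v_n) = ±D^{n-1} a, where D = det(a, u₁,…,u_n) and the sign depends only on n. -/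
noncomputable section
open scoped BigOperators ComplexConjugate

namespace ProjSimplex

/-!
The cross product of the rows of a matrix `M` other than row `i` is `(-1)^i` times the `i`-th
column of `adjugate M`. Hence, with `M` the matrix of rows `a, u₁, …, u_n`, the vectors `vⱼ` are,
up to sign, the columns of `adjugate M` other than the first, i.e. the rows of `adjugate Mᵀ` other
than the first, and `L(v₁ ∧ … ∧ v_n)` is, up to sign, the first column of
`adjugate (adjugate Mᵀ) = D^{n-1} • Mᵀ`, which is `D^{n-1} a`.
-/

open Matrix

theorem crossProd_smul {n : ℕ} (c : Fin n → ℂ) (b : Fin n → Fin (n+1) → ℂ) :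
    crossProd (fun i => c i • b i) = (∏ i, c i) • crossProd b := by
  funext t
  simp only [crossProd, Pi.smul_apply, smul_eq_mul]
  rw [mul_left_comm, ← det_mul_column]
  rfl

theorem crossProd_rows_succAbove {n : ℕ} (M : Matrix (Fin (n+1)) (Fin (n+1)) ℂ) (i : Fin (n+1)) :
    crossProd (fun k => M (i.succAbove k)) = fun t => (-1) ^ (i : ℕ) * adjugate M t i := by
  funext t
  have hsign : (-1 : ℂ) ^ (i : ℕ) * (-1) ^ ((i : ℕ) + t) = (-1) ^ (t : ℕ) := by
    rw [← pow_add, ← add_assoc, ← two_mul, pow_add, pow_mul, neg_one_sq, one_pow, one_mul]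
  rw [adjugate_fin_succ_eq_det_submatrix, ← mul_assoc, hsign]
  rfl

theorem cons_comp_succ_succAbove {n : ℕ} {α : Type*} (a : α) (u : Fin (n+1) → α) (j : Fin (n+1)) :
    (Fin.cons a u : Fin (n+2) → α) ∘ j.succ.succAbove = Fin.cons a (u ∘ j.succAbove) := by
  funext k
  cases k using Fin.cases <;> simp [Fin.succ_succAbove_succ]

-- The paper's `n` is `n + 1` here.
theorem crossProd_of_crossProds_general {n : ℕ} (a : Fin (n+2) → ℂ)
    (u : Fin (n+1) → Fin (n+2) → ℂ) :
    ∃ ε : ℂ, (ε = 1 ∨ ε = -1) ∧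
      crossProd (fun j : Fin (n+1) => crossProd (Fin.cons a (u ∘ j.succAbove))) =
        fun t => ε * (rowsDet a u) ^ n * a t := by
  set M : Matrix (Fin (n+2)) (Fin (n+2)) ℂ := of (Fin.cons a u)
  have hv : ∀ j : Fin (n+1), crossProd (Fin.cons a (u ∘ j.succAbove)) =
      (-1 : ℂ) ^ ((j : ℕ) + 1) • (adjugate Mᵀ) (Fin.succAbove 0 j) := by
    intro j
    rw [← cons_comp_succ_succAbove, ← adjugate_transpose]
    exact crossProd_rows_succAbove M j.succ
  refine ⟨∏ j : Fin (n+1), (-1 : ℂ) ^ ((j : ℕ) + 1), ?_, ?_⟩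
  · rw [Finset.prod_pow_eq_pow_sum]
    exact neg_one_pow_eq_or ℂ _
  · rw [funext hv, crossProd_smul, crossProd_rows_succAbove, adjugate_adjugate _ (by simp)]
    funext t
    simp [M, rowsDet]
    ring

/-- `L(v₁∧…∧v_n) = ± D^{n-1} a`. Here the paper's `n` is `n+1`:
`a, u₁,…,u_{n+1}` are `n+2` linearly independent vectors in `ℂ^{n+2}`,
`vⱼ = L(a∧u₁∧…∧ûⱼ∧…∧u_{n+1})`, and `L(v₁∧…∧v_{n+1}) = ± D^n a`
with `D = det(a,u₁,…,u_{n+1})`. -/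
theorem crossProd_of_crossProds {n : ℕ} (a : Fin (n+2) → ℂ)
    (u : Fin (n+1) → Fin (n+2) → ℂ)
    (hli : LinearIndependent ℂ (Fin.cons a u : Fin (n+2) → Fin (n+2) → ℂ)) :
    ∃ ε : ℂ, (ε = 1 ∨ ε = -1) ∧
      crossProd (fun j : Fin (n+1) => crossProd (Fin.cons a (u ∘ j.succAbove))) =
        fun t => ε * (rowsDet a u) ^ n * a t :=
  crossProd_of_crossProds_general a u

end ProjSimplex
end
end

section
/- Let u₀,…,u_n be n+1 linearly independent unit vectors in ℂ^{n+1} and for each j let dⱼ = |det(u₀,…,u_n)| / |u₀∧…∧u_{j-1}∧u_{j+1}∧…∧u_n| (the Fubini–Study distance from vertex [uⱼ] to the opposite face hyperplane). Then (min_j dⱼ)^n ≤ |det(u₀,…,u_n)|. -/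
noncomputable section
open scoped BigOperators ComplexConjugate

open InnerProductSpace Matrix
open scoped InnerProductSpace

theorem Fin.succAboveOrderEmb_bijective (n : ℕ) :
    Function.Bijective (Fin.succAboveOrderEmb : Fin (n + 1) → Fin n ↪o Fin (n + 1)) := by
  refine ⟨fun i j h => ?_, fun s => ?_⟩
  · have := Fin.range_succAboveOrderEmb i
    rwa [h, Fin.range_succAboveOrderEmb, compl_inj_iff, Set.singleton_eq_singleton_iff,
      eq_comm] at this
  · obtain ⟨p, hp⟩ : ∃ p, p ∉ Set.range s := by
      by_contra! h
      simpa using Fintype.card_le_of_surjective s (Set.range_eq_univ.mp (Set.eq_univ_of_forall h))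
    refine ⟨p, ?_⟩
    rw [← Finset.orderEmbOfFin_compl_singleton_eq_succAboveOrderEmb]
    exact (Finset.orderEmbOfFin_unique' _ fun x => by
      simpa using fun h => hp ⟨x, h⟩).symm

section GramSchmidt

variable {𝕜 E ι : Type*} [RCLike 𝕜] [NormedAddCommGroup E] [InnerProductSpace 𝕜 E]
  [FiniteDimensional 𝕜 E] [Fintype ι] [LinearOrder ι]
  (h : Module.finrank 𝕜 E = Fintype.card ι)

theorem norm_inner_le_norm_mul_norm_inner_gramSchmidtOrthonormalBasis [LocallyFiniteOrderBot ι]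
    {f : ι → E} (hf : LinearIndependent 𝕜 f) {i : ι} {ν : E} (hν : ∀ j < i, ⟪ν, f j⟫_𝕜 = 0) :
    ‖⟪ν, f i⟫_𝕜‖ ≤ ‖ν‖ * ‖⟪gramSchmidtOrthonormalBasis h f i, f i⟫_𝕜‖ := by
  set e := gramSchmidtOrthonormalBasis h f
  have he : ∀ k < i, ⟪ν, e k⟫_𝕜 = 0 := by
    intro k hk
    have hek : e k ∈ Submodule.span 𝕜 (f '' Set.Iic k) := by
      have hk0 : gramSchmidtNormed 𝕜 f k ≠ 0 :=
        norm_ne_zero_iff.mp (by rw [gramSchmidtNormed_unit_length k hf]; exact one_ne_zero)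
      rw [gramSchmidtOrthonormalBasis_apply h hk0, ← span_gramSchmidt_Iic,
        ← span_gramSchmidtNormed]
      exact Submodule.subset_span (Set.mem_image_of_mem _ Set.self_mem_Iic)
    refine Submodule.span_induction ?_ (inner_zero_right _) (fun _ _ _ _ h₁ h₂ => ?_)
      (fun _ _ _ h₁ => ?_) hek
    · rintro _ ⟨j, hj, rfl⟩
      exact hν j (lt_of_le_of_lt hj hk)
    · rw [inner_add_right, h₁, h₂, add_zero]
    · rw [inner_smul_right, h₁, mul_zero]
  have hexpand : ⟪ν, f i⟫_𝕜 = ⟪ν, e i⟫_𝕜 * ⟪e i, f i⟫_𝕜 := by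
    rw [← e.sum_inner_mul_inner, Finset.sum_eq_single i]
    · intro k _ hki
      rcases hki.lt_or_gt with hk | hk
      · rw [he k hk, zero_mul]
      · rw [gramSchmidtOrthonormalBasis_inv_triangular h f hk, mul_zero]
    · simp
  rw [hexpand, norm_mul]
  gcongr
  simpa using norm_inner_le_norm (𝕜 := 𝕜) ν (e i)

theorem norm_le_norm_inner_gramSchmidtOrthonormalBasis_bot [LocallyFiniteOrder ι] [OrderBot ι]
    {f : ι → E} (hf : LinearIndependent 𝕜 f) :
    ‖f ⊥‖ ≤ ‖⟪gramSchmidtOrthonormalBasis h f ⊥, f ⊥⟫_𝕜‖ := by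
  have := norm_inner_le_norm_mul_norm_inner_gramSchmidtOrthonormalBasis h hf (ν := f ⊥)
    (i := ⊥) fun j hj => absurd hj not_lt_bot
  rw [inner_self_eq_norm_sq_to_K, norm_pow, RCLike.norm_ofReal, abs_norm, sq] at this
  exact le_of_mul_le_mul_left this (norm_pos_iff.mpr (hf.ne_zero ⊥))

theorem norm_det_eq_prod_norm_inner_gramSchmidtOrthonormalBasis [LocallyFiniteOrderBot ι]
    [DecidableEq ι] (f : ι → E) (b : OrthonormalBasis ι 𝕜 E) :
    ‖b.toBasis.det f‖ = ∏ i, ‖⟪gramSchmidtOrthonormalBasis h f i, f i⟫_𝕜‖ := by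
  set e := gramSchmidtOrthonormalBasis h f
  have : b.toBasis.det f = b.toBasis.det e * e.toBasis.det f := by
    rw [Module.Basis.det_apply, Module.Basis.det_apply, Module.Basis.det_apply,
      ← Module.Basis.toMatrix_mul_toMatrix b.toBasis e.toBasis f, Matrix.det_mul,
      OrthonormalBasis.coe_toBasis]
  rw [this, norm_mul, OrthonormalBasis.det_to_matrix_orthonormalBasis, one_mul,
    gramSchmidtOrthonormalBasis_det, norm_prod]

end GramSchmidt

namespace ProjSimplex

theorem hermNorm_eq_norm {m : ℕ} (a : Fin m → ℂ) : hermNorm a = ‖WithLp.toLp 2 a‖ := by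
  rw [EuclideanSpace.norm_eq]
  rfl

theorem det_eq_basisFun_det {n : ℕ} (u : Fin (n+1) → Fin (n+1) → ℂ) :
    (of u).det =
      (EuclideanSpace.basisFun (Fin (n+1)) ℂ).toBasis.det fun i => WithLp.toLp 2 (u i) := by
  rw [Module.Basis.det_apply, ← det_transpose]
  rfl

theorem wedgeNormSq_eq_sum_succAboveOrderEmb {n : ℕ} (b : Fin n → Fin (n+1) → ℂ) :
    wedgeNormSq b = ∑ l, ‖minor b (Fin.succAboveOrderEmb l)‖ ^ 2 :=
  (Fintype.sum_bijective _ (Fin.succAboveOrderEmb_bijective n) _ _ fun _ => rfl).symm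

def faceNormal {n : ℕ} (u : Fin (n+1) → Fin (n+1) → ℂ) (j : Fin (n+1)) :
    EuclideanSpace ℂ (Fin (n+1)) :=
  WithLp.toLp 2 fun l => star (adjugate (of u) l j)

theorem norm_faceNormal {n : ℕ} (u : Fin (n+1) → Fin (n+1) → ℂ) (j : Fin (n+1)) :
    ‖faceNormal u j‖ = wedgeNorm (u ∘ j.succAbove) := by
  rw [EuclideanSpace.norm_eq, wedgeNorm, wedgeNormSq_eq_sum_succAboveOrderEmb]
  congr 1
  refine Finset.sum_congr rfl fun l _ => ?_
  simp only [faceNormal, norm_star, adjugate_fin_succ_eq_det_submatrix, norm_mul, norm_pow,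
    norm_neg, norm_one, one_pow, one_mul]
  rfl

theorem inner_faceNormal {n : ℕ} (u : Fin (n+1) → Fin (n+1) → ℂ) (j s : Fin (n+1)) :
    ⟪faceNormal u j, WithLp.toLp 2 (u s)⟫_ℂ = if s = j then (of u).det else 0 := by
  have := congrFun (congrFun (mul_adjugate (of u)) s) j
  rw [Matrix.smul_apply, one_apply, smul_eq_mul, mul_ite, mul_one, mul_zero, mul_apply] at this
  rw [← this, PiLp.inner_apply]
  refine Finset.sum_congr rfl fun l _ => ?_
  simp [faceNormal]

theorem norm_det_div_wedgeNorm_le_norm_inner_gramSchmidtOrthonormalBasis {n : ℕ}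
    {u : Fin (n+1) → Fin (n+1) → ℂ} (hli : LinearIndependent ℂ fun i => WithLp.toLp 2 (u i))
    (j : Fin (n+1)) :
    ‖(of u).det‖ / wedgeNorm (u ∘ j.succAbove) ≤
      ‖⟪gramSchmidtOrthonormalBasis (finrank_euclideanSpace (𝕜 := ℂ) (ι := Fin (n+1)))
        (fun i => WithLp.toLp 2 (u i)) j, WithLp.toLp 2 (u j)⟫_ℂ‖ := by
  refine div_le_of_le_mul₀ (Real.sqrt_nonneg _) (norm_nonneg _) ?_
  have := norm_inner_le_norm_mul_norm_inner_gramSchmidtOrthonormalBasis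
    (finrank_euclideanSpace (𝕜 := ℂ) (ι := Fin (n+1))) hli (ν := faceNormal u j) (i := j)
    fun s hs => by rw [inner_faceNormal, if_neg hs.ne]
  rwa [inner_faceNormal, if_pos rfl, norm_faceNormal, mul_comm] at this

/-- main theorem, `d_min^n ≤ |det(u₀,…,u_n)|`. -/
theorem min_dist_pow_le_abs_det {n : ℕ} (u : Fin (n+1) → Fin (n+1) → ℂ)
    (hli : LinearIndependent ℂ u) (hu : ∀ j, hermNorm (u j) = 1) :
    (⨅ j : Fin (n+1),
        ‖Matrix.det (Matrix.of u)‖ / wedgeNorm (u ∘ j.succAbove)) ^ n ≤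
      ‖Matrix.det (Matrix.of u)‖ := by
  set f : Fin (n+1) → EuclideanSpace ℂ (Fin (n+1)) := fun i => WithLp.toLp 2 (u i)
  have hf : LinearIndependent ℂ f :=
    hli.map' (WithLp.linearEquiv 2 ℂ (Fin (n+1) → ℂ)).symm.toLinearMap (LinearEquiv.ker _)
  set a : Fin (n+1) → ℝ := fun i =>
    ‖⟪gramSchmidtOrthonormalBasis (finrank_euclideanSpace (𝕜 := ℂ) (ι := Fin (n+1))) f i, f i⟫_ℂ‖
  have hdet : ‖(of u).det‖ = a 0 * ∏ i : Fin n, a i.succ := by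
    rw [det_eq_basisFun_det, norm_det_eq_prod_norm_inner_gramSchmidtOrthonormalBasis,
      Fin.prod_univ_succ]
  have ha0 : 1 ≤ a 0 := by
    have h := norm_le_norm_inner_gramSchmidtOrthonormalBasis_bot
      (finrank_euclideanSpace (𝕜 := ℂ) (ι := Fin (n+1))) hf
    rwa [bot_eq_zero, ← hermNorm_eq_norm, hu] at h
  set m := ⨅ j : Fin (n+1), ‖(of u).det‖ / wedgeNorm (u ∘ j.succAbove)
  have hm : ∀ j, m ≤ a j := fun j =>
    (ciInf_le (Finite.bddBelow_range _) j).trans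
      (norm_det_div_wedgeNorm_le_norm_inner_gramSchmidtOrthonormalBasis hf j)
  have hm0 : 0 ≤ m := le_ciInf fun _ => div_nonneg (norm_nonneg _) (Real.sqrt_nonneg _)
  calc m ^ n = ∏ _i : Fin n, m := by simp
    _ ≤ ∏ i : Fin n, a i.succ := Finset.prod_le_prod (fun _ _ => hm0) fun i _ => hm i.succ
    _ ≤ a 0 * ∏ i : Fin n, a i.succ :=
        le_mul_of_one_le_left (Finset.prod_nonneg fun _ _ => norm_nonneg _) ha0
    _ = ‖(of u).det‖ := hdet.symm

end ProjSimplex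
end
end
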